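/- arXiv:2108.04715 — 12 statements merged into one kernel-verified Lean document; each statement's English description precedes it below -/
import Mathlib

section
/- For real numbers $p, l, x > 0$, define $h(x; p, l) = \frac{\exp(-(x+p)^2/l^2) - \exp(-x^2/l^2)}{\exp(-p^2/l^2) - 1}$. If $l_1, l_2 > 0$ and there exists $x > 0$ with $h(x; p, l_1) = h(x; p, l_2)$, then $l_1 = l_2$. -/
/-!
Put `w = exp (-p² / l²) ∈ (0, 1)` and `r = 1 + 2x / p ≥ 1`; then `exp (-(2xp + p²) / l²) = w ^ r`,
so that
  `h(x; p, l) = exp (-x² / l²) * (1 - w ^ r) / (1 - w)`.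
The second factor is the slope of the secant of the convex function `w ↦ w ^ r` between `w` and `1`,
hence nondecreasing in `w`, and `w` increases with `l`. The first factor is positive and strictly
increasing in `l`, so `l ↦ h(x; p, l)` is strictly monotone on `(0, ∞)`.
-/

open Real Set

noncomputable def gaussianIncrementRatio (x p l : ℝ) : ℝ :=
  (exp (-(x + p) ^ 2 / l ^ 2) - exp (-x ^ 2 / l ^ 2)) / (exp (-p ^ 2 / l ^ 2) - 1)

lemma monotoneOn_one_sub_rpow_div_one_sub {r : ℝ} (hr : 1 ≤ r) :
    MonotoneOn (fun w : ℝ => (1 - w ^ r) / (1 - w)) (Ico 0 1) := by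
  intro v hv w hw hvw
  have hsecant := (convexOn_rpow hr).secant_mono (a := 1) (by simp) (mem_Ici.2 hv.1)
    (mem_Ici.2 hw.1) hv.2.ne hw.2.ne hvw
  simpa only [one_rpow, ← neg_sub (1 : ℝ), neg_div_neg_eq] using hsecant

lemma one_sub_rpow_div_one_sub_pos {r w : ℝ} (hr : 0 < r) (hw : w ∈ Ico 0 1) :
    0 < (1 - w ^ r) / (1 - w) :=
  div_pos (sub_pos.2 (rpow_lt_one hw.1 hw.2 hr)) (sub_pos.2 hw.2)

lemma strictMonoOn_exp_neg_sq_div_sq {c : ℝ} (hc : c ≠ 0) :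
    StrictMonoOn (fun l : ℝ => exp (-c ^ 2 / l ^ 2)) (Ioi 0) := by
  intro l₁ hl₁ l₂ hl₂ hl
  have hl₁ : 0 < l₁ := hl₁
  simp only [exp_lt_exp, neg_div, neg_lt_neg_iff]
  gcongr

lemma exp_neg_sq_div_sq_mem_Ico {c l : ℝ} (hc : c ≠ 0) (hl : l ≠ 0) :
    exp (-c ^ 2 / l ^ 2) ∈ Ico 0 1 :=
  ⟨(exp_pos _).le, Real.exp_lt_one_iff.2 <|
    div_neg_of_neg_of_pos (neg_neg_of_pos (sq_pos_of_ne_zero hc)) (by positivity)⟩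

lemma gaussianIncrementRatio_eq {x p l : ℝ} (hp : p ≠ 0) (hl : l ≠ 0) :
    gaussianIncrementRatio x p l = exp (-x ^ 2 / l ^ 2) *
      ((1 - exp (-p ^ 2 / l ^ 2) ^ (1 + 2 * x / p)) / (1 - exp (-p ^ 2 / l ^ 2))) := by
  have hw : exp (-p ^ 2 / l ^ 2) ∈ Ico 0 1 := exp_neg_sq_div_sq_mem_Ico hp hl
  have hsplit : exp (-(x + p) ^ 2 / l ^ 2) =
      exp (-x ^ 2 / l ^ 2) * exp (-p ^ 2 / l ^ 2) ^ (1 + 2 * x / p) := by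
    rw [← exp_mul, ← exp_add]
    congr 1
    field_simp
    ring
  rw [gaussianIncrementRatio, hsplit]
  generalize exp (-p ^ 2 / l ^ 2) = w at hw ⊢
  have h1w : 1 - w ≠ 0 := (sub_pos.2 hw.2).ne'
  have hw1 : w - 1 ≠ 0 := (sub_neg.2 hw.2).ne
  field_simp
  ring

theorem strictMonoOn_gaussianIncrementRatio {x p : ℝ} (hx : 0 < x) (hp : 0 < p) :
    StrictMonoOn (gaussianIncrementRatio x p) (Ioi 0) := by
  intro l₁ hl₁ l₂ hl₂ hl
  have hr : 1 ≤ 1 + 2 * x / p := le_add_of_nonneg_right (by positivity)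
  have hw₁ := exp_neg_sq_div_sq_mem_Ico hp.ne' (ne_of_gt hl₁)
  have hw₂ := exp_neg_sq_div_sq_mem_Ico hp.ne' (ne_of_gt hl₂)
  rw [gaussianIncrementRatio_eq hp.ne' (ne_of_gt hl₁),
    gaussianIncrementRatio_eq hp.ne' (ne_of_gt hl₂)]
  exact mul_lt_mul (strictMonoOn_exp_neg_sq_div_sq hx.ne' hl₁ hl₂ hl)
    (monotoneOn_one_sub_rpow_div_one_sub hr hw₁ hw₂
      ((strictMonoOn_exp_neg_sq_div_sq hp.ne' hl₁ hl₂ hl).le))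
    (one_sub_rpow_div_one_sub_pos (by linarith) hw₁) (exp_pos _).le

theorem h_injective (p : ℝ) (hp : 0 < p) (l₁ l₂ : ℝ) (hl₁ : 0 < l₁) (hl₂ : 0 < l₂)
    (h : ∃ x : ℝ, 0 < x ∧
      (Real.exp (-(x + p) ^ 2 / l₁ ^ 2) - Real.exp (-x ^ 2 / l₁ ^ 2)) /
        (Real.exp (-p ^ 2 / l₁ ^ 2) - 1) =
      (Real.exp (-(x + p) ^ 2 / l₂ ^ 2) - Real.exp (-x ^ 2 / l₂ ^ 2)) /
        (Real.exp (-p ^ 2 / l₂ ^ 2) - 1)) :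
    l₁ = l₂ := by
  obtain ⟨x, hx, heq⟩ := h
  exact (strictMonoOn_gaussianIncrementRatio hx hp).injOn hl₁ hl₂ heq
end

section
/- For fixed $x, p > 0$, define $s(y) = \frac{\exp(-(x+p)^2 y^2) - 1}{\exp(-p^2 y^2) - 1}$ for $y > 0$. Then $s$ is strictly decreasing on $(0, \infty)$. -/
/-!
Writing `u = exp (-p² y²) ∈ (0, 1)` and `r = (x + p)² / p² > 1`, the quotient is
`(u ^ r - 1) / (u - 1)`, the slope of the secant of the strictly convex function `u ↦ u ^ r`
between `u` and `1`. That slope increases with `u`, while `u` decreases with `y`.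
-/

open Real Set

theorem strictMonoOn_rpow_secant_one {r : ℝ} (hr : 1 < r) :
    StrictMonoOn (fun u : ℝ => (u ^ r - 1) / (u - 1)) (Ico 0 1) := by
  intro u hu v hv huv
  simpa only [one_rpow] using (strictConvexOn_rpow hr).secant_strict_mono (a := 1)
    (mem_Ici.2 zero_le_one) (mem_Ici.2 hu.1) (mem_Ici.2 hv.1) hu.2.ne hv.2.ne huv

theorem strictAntiOn_exp_neg_mul_sub_one_div {a b : ℝ} (hb : 0 < b) (hba : b < a) :
    StrictAntiOn (fun t : ℝ => (exp (-a * t) - 1) / (exp (-b * t) - 1)) (Ioi 0) := by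
  have hexp_anti : StrictAntiOn (fun t : ℝ => exp (-b * t)) (Ioi 0) := fun s _ t _ hst =>
    exp_lt_exp.2 (by nlinarith)
  have hmaps : MapsTo (fun t : ℝ => exp (-b * t)) (Ioi 0) (Ico 0 1) := fun t ht =>
    ⟨(exp_pos _).le, exp_lt_one_iff.2 (by nlinarith [mem_Ioi.1 ht])⟩
  have hcomp := (strictMonoOn_rpow_secant_one ((one_lt_div hb).2 hba)).comp_strictAntiOn
    hexp_anti hmaps
  refine hcomp.congr fun t _ => ?_
  have hexp : exp (-a * t) = exp (-b * t) ^ (a / b) := by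
    rw [← exp_mul]
    field_simp
  simp only [Function.comp, hexp]

theorem s_strictAnti (x p : ℝ) (hx : 0 < x) (hp : 0 < p) :
    StrictAntiOn
      (fun y : ℝ =>
        (Real.exp (-(x + p) ^ 2 * y ^ 2) - 1) / (Real.exp (-p ^ 2 * y ^ 2) - 1))
      (Set.Ioi 0) := by
  have hsq_lt : p ^ 2 < (x + p) ^ 2 := by nlinarith
  have hsq_mono : StrictMonoOn (fun y : ℝ => y ^ 2) (Ioi 0) := fun s hs t _ hst =>
    pow_lt_pow_left₀ hst (le_of_lt hs) two_ne_zero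
  exact (strictAntiOn_exp_neg_mul_sub_one_div (by positivity) hsq_lt).comp_strictMonoOn
    hsq_mono fun y (hy : 0 < y) => pow_pos hy 2
end

section
/- Let $b > a > 1$ be real numbers and $u_1, u_2, u_3$ real numbers, not all zero. Then the function $h(t) = u_1(t - 1) + u_2(t^a - 1) + u_3(t^b - 1)$ has at most $3$ roots in $[1, \infty)$ (i.e., at most $3$ distinct $t \geq 1$ with $h(t) = 0$). -/
/-!
Subtracting the constant term, `h t = -(u₁ + u₂ + u₃) t⁰ + u₁ t¹ + u₂ tᵃ + u₃ tᵇ` is a sum of four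
real powers with distinct exponents. A sum `∑ cᵢ t^eᵢ` of `n` such terms, not all `cᵢ = 0`, has
fewer than `n` positive zeros: dividing by `t^e₀` does not move the zeros and turns the sum into
`c₀ + ∑ cᵢ t^(eᵢ - e₀)`, whose derivative has only `n - 1` terms, so Rolle's theorem and induction
on `n` conclude.
-/

open Set Finset

theorem exists_deriv_zeros_card_add_one_ge {f f' : ℝ → ℝ} {s : Set ℝ} [s.OrdConnected]
    (hf : ∀ x ∈ s, HasDerivAt f (f' x) x) {S : Finset ℝ} (hS : ∀ x ∈ S, x ∈ s ∧ f x = 0) :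
    ∃ T : Finset ℝ, (∀ x ∈ T, x ∈ s ∧ f' x = 0) ∧ #S ≤ #T + 1 := by
  have exists_rolle_point : ∀ p : ℝ × ℝ, ∃ c, p.1 ∈ S → p.2 ∈ S → p.1 < p.2 → c ∈ Ioo p.1 p.2 ∧ f' c = 0 := by
    rintro ⟨x, y⟩
    by_cases h : x ∈ S ∧ y ∈ S ∧ x < y
    · obtain ⟨hx, hy, hxy⟩ := h
      have hIcc : Icc x y ⊆ s := Set.Icc_subset s (hS x hx).1 (hS y hy).1
      obtain ⟨c, hc, hc'⟩ := exists_hasDerivAt_eq_zero hxy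
        (fun t ht ↦ (hf t (hIcc ht)).continuousAt.continuousWithinAt)
        ((hS x hx).2.trans (hS y hy).2.symm) (fun t ht ↦ hf t (hIcc (Ioo_subset_Icc_self ht)))
      exact ⟨c, fun _ _ _ ↦ ⟨hc, hc'⟩⟩
    · exact ⟨0, fun hx hy hxy ↦ absurd ⟨hx, hy, hxy⟩ h⟩
  choose g hg using exists_rolle_point
  refine ⟨((S ×ˢ S).filter fun p ↦ p.1 < p.2).image g, ?_, ?_⟩
  · simp only [Finset.mem_image, Finset.mem_filter, Finset.mem_product]
    rintro _ ⟨⟨x, y⟩, ⟨⟨hx, hy⟩, hxy⟩, rfl⟩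
    obtain ⟨hc, hc'⟩ := hg (x, y) hx hy hxy
    exact ⟨Set.Icc_subset s (hS x hx).1 (hS y hy).1 (Ioo_subset_Icc_self hc), hc'⟩
  · refine card_le_of_interleaved fun x hx y hy hxy _ ↦ ⟨g (x, y), ?_, hg (x, y) hx hy hxy |>.1⟩
    exact Finset.mem_image_of_mem _ (Finset.mem_filter.2 ⟨Finset.mem_product.2 ⟨hx, hy⟩, hxy⟩)

theorem hasDerivAt_sum_mul_rpow {ι : Type*} (u : Finset ι) (c d : ι → ℝ) {t : ℝ} (ht : t ≠ 0) :
    HasDerivAt (fun x ↦ ∑ i ∈ u, c i * x ^ d i) (∑ i ∈ u, c i * d i * t ^ (d i - 1)) t :=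
  HasDerivAt.fun_sum fun i _ ↦ ((Real.hasDerivAt_rpow_const (Or.inl ht)).const_mul (c i)).congr_deriv
    (mul_assoc _ _ _).symm

theorem sum_mul_rpow_eq_rpow_mul_sum {ι : Type*} (u : Finset ι) (c d : ι → ℝ) (r : ℝ) {t : ℝ}
    (ht : 0 < t) : ∑ i ∈ u, c i * t ^ d i = t ^ r * ∑ i ∈ u, c i * t ^ (d i - r) := by
  rw [Finset.mul_sum]
  refine Finset.sum_congr rfl fun i _ ↦ ?_
  rw [mul_left_comm, ← Real.rpow_add ht, add_sub_cancel]

theorem card_pos_zeros_sum_mul_rpow_lt {n : ℕ} (e : Fin n → ℝ) (he : Function.Injective e)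
    (c : Fin n → ℝ) (hc : c ≠ 0) {S : Finset ℝ}
    (hS : ∀ t ∈ S, 0 < t ∧ ∑ i, c i * t ^ e i = 0) : #S < n := by
  induction n generalizing S with
  | zero => exact absurd (Subsingleton.elim c 0) hc
  | succ n ih =>
    set d : Fin n → ℝ := fun i ↦ e (Fin.succ i) - e 0
    have hd : ∀ i, d i ≠ 0 := fun i ↦ sub_ne_zero.2 (he.ne (Fin.succ_ne_zero i))
    have hshift : ∀ t, 0 < t →
        ∑ i, c i * t ^ e i = t ^ e 0 * (c 0 + ∑ i, c i.succ * t ^ d i) := by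
      intro t ht
      rw [sum_mul_rpow_eq_rpow_mul_sum _ _ _ (e 0) ht, Fin.sum_univ_succ, sub_self,
        Real.rpow_zero, mul_one]
    by_cases htail : ∀ i : Fin n, c i.succ = 0
    · have hS_empty : S = ∅ := by
        refine Finset.eq_empty_of_forall_notMem fun t ht ↦ hc ?_
        obtain ⟨htpos, hroot⟩ := hS t ht
        simp only [hshift t htpos, htail, zero_mul, Finset.sum_const_zero, add_zero,
          mul_eq_zero, (Real.rpow_pos_of_pos htpos _).ne', false_or] at hroot
        ext i
        exact Fin.cases hroot htail i
      simp [hS_empty]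
    · obtain ⟨j, hj⟩ := not_forall.1 htail
      have hg : ∀ t ∈ Ioi (0 : ℝ), HasDerivAt (fun x ↦ c 0 + ∑ i, c i.succ * x ^ d i)
          (∑ i, c i.succ * d i * t ^ (d i - 1)) t := fun t ht ↦
        (hasDerivAt_sum_mul_rpow _ _ _ (ne_of_gt ht)).const_add (c 0)
      obtain ⟨T, hT, hST⟩ := exists_deriv_zeros_card_add_one_ge hg (S := S) fun t ht ↦ by
        obtain ⟨htpos, hroot⟩ := hS t ht
        rw [hshift t htpos, mul_eq_zero] at hroot
        exact ⟨htpos, hroot.resolve_left (Real.rpow_pos_of_pos htpos _).ne'⟩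
      have hd_inj : Function.Injective fun i ↦ d i - 1 := fun i j hij ↦
        Fin.succ_injective _ (he (by simpa [d] using hij))
      have := ih _ hd_inj (fun i ↦ c i.succ * d i) (Function.ne_iff.2 ⟨j, mul_ne_zero hj (hd j)⟩) hT
      omega

theorem h_at_most_three_roots (a b : ℝ) (ha : 1 < a) (hab : a < b)
    (u₁ u₂ u₃ : ℝ) (hu : ¬(u₁ = 0 ∧ u₂ = 0 ∧ u₃ = 0)) :
    ∀ S : Finset ℝ,
      (∀ t ∈ S, 1 ≤ t ∧ u₁ * (t - 1) + u₂ * (t ^ a - 1) + u₃ * (t ^ b - 1) = 0) →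
      S.card ≤ 3 := by
  intro S hS
  have hexp : StrictMono ![0, 1, a, b] := by simp [ha, hab]
  have hcoef : ![-(u₁ + u₂ + u₃), u₁, u₂, u₃] ≠ 0 := fun h ↦
    hu ⟨congrFun h 1, congrFun h 2, congrFun h 3⟩
  have := card_pos_zeros_sum_mul_rpow_lt _ hexp.injective _ hcoef (S := S) fun t ht ↦ by
    obtain ⟨ht1, hroot⟩ := hS t ht
    refine ⟨zero_lt_one.trans_le ht1, ?_⟩
    simp only [Fin.sum_univ_four, Matrix.cons_val, Real.rpow_zero, Real.rpow_one]
    linear_combination hroot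
  omega
end

section
/- Let $0 < x_1 < 1$, $0 < x_2 < 1$ with $x_1 \neq x_2$, and let $1 < A < B$ be real numbers. Then $\det \begin{pmatrix} x_1^{A-1} - 1 & x_1^{B-1} - 1 \\ x_2^{A-1} - 1 & x_2^{B-1} - 1 \end{pmatrix} \neq 0$. -/
/-!
With `t = x ^ (A - 1)` and `c = (B - 1) / (A - 1) > 1` the determinant becomes
`(t₁ - 1) (t₂ ^ c - 1) - (t₁ ^ c - 1) (t₂ - 1)`, which vanishes exactly when the secants of the
strictly convex function `t ↦ t ^ c` through `1` and `t₁`, resp. `1` and `t₂`, have the same slope.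
Secant slopes of a strictly convex function from a fixed point are strictly monotone, and
`x ↦ x ^ (A - 1)` is injective, so `x₁ ≠ x₂` rules this out.
-/

open Real Set

theorem StrictConvexOn.secant_ne {𝕜 : Type*} [Field 𝕜] [LinearOrder 𝕜] [IsStrictOrderedRing 𝕜]
    {s : Set 𝕜} {f : 𝕜 → 𝕜} (hf : StrictConvexOn 𝕜 s f) {a x y : 𝕜} (ha : a ∈ s) (hx : x ∈ s)
    (hy : y ∈ s) (hxa : x ≠ a) (hya : y ≠ a) (hxy : x ≠ y) :
    (f x - f a) / (x - a) ≠ (f y - f a) / (y - a) := by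
  rcases hxy.lt_or_gt with h | h
  · exact (hf.secant_strict_mono ha hx hy hxa hya h).ne
  · exact (hf.secant_strict_mono ha hy hx hya hxa h).ne'

theorem Real.sub_one_mul_rpow_sub_one_ne {t₁ t₂ c : ℝ} (hc : 1 < c) (h₁ : 0 ≤ t₁) (h₂ : 0 ≤ t₂)
    (h₁1 : t₁ ≠ 1) (h₂1 : t₂ ≠ 1) (h₁₂ : t₁ ≠ t₂) :
    (t₁ - 1) * (t₂ ^ c - 1) - (t₁ ^ c - 1) * (t₂ - 1) ≠ 0 := by
  intro h
  apply (strictConvexOn_rpow hc).secant_ne (mem_Ici.2 zero_le_one) (mem_Ici.2 h₁) (mem_Ici.2 h₂)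
    h₁1 h₂1 h₁₂
  rw [div_eq_div_iff (sub_ne_zero.2 h₁1) (sub_ne_zero.2 h₂1), one_rpow]
  linear_combination -h

theorem det2_ne_zero (x₁ x₂ A B : ℝ) (hx₁ : 0 < x₁) (hx₁' : x₁ < 1)
    (hx₂ : 0 < x₂) (hx₂' : x₂ < 1) (hne : x₁ ≠ x₂) (hA : 1 < A) (hAB : A < B) :
    Matrix.det !![x₁ ^ (A - 1) - 1, x₁ ^ (B - 1) - 1;
                  x₂ ^ (A - 1) - 1, x₂ ^ (B - 1) - 1] ≠ 0 := by
  have ha : 0 < A - 1 := by linarith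
  have hc : 1 < (B - 1) / (A - 1) := (one_lt_div ha).2 (by linarith)
  have hpow : ∀ x : ℝ, 0 ≤ x → x ^ (B - 1) = (x ^ (A - 1)) ^ ((B - 1) / (A - 1)) := fun x hx => by
    rw [← rpow_mul hx, mul_div_cancel₀ _ ha.ne']
  rw [Matrix.det_fin_two_of, hpow x₁ hx₁.le, hpow x₂ hx₂.le]
  exact sub_one_mul_rpow_sub_one_ne hc (rpow_nonneg hx₁.le _) (rpow_nonneg hx₂.le _)
    (rpow_lt_one hx₁.le hx₁' ha).ne (rpow_lt_one hx₂.le hx₂' ha).ne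
    fun h => hne (rpow_left_injOn ha.ne' hx₁.le hx₂.le h)
end

section
/- Let $1 < A < B$ be real numbers and define $f(x) = \frac{x^B - x^A}{x^A - 1}$ for $0 < x < 1$. Then $f$ is strictly monotone (increasing) on $(0, 1)$; in particular, $f$ is injective on $(0,1)$. -/
open Set

/-!
Write `u = x ^ A`, so that `x ^ B = u ^ (B / A)` and the function equals `(u ^ r - 1) / (u - 1) - 1`
with `r = B / A > 1`. That quotient is the slope of the secant of the strictly convex function
`u ↦ u ^ r` through `1` and `u`, hence strictly increasing in `u`, and `u` is strictly increasing in `x`.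
-/

theorem StrictConvexOn.strictMonoOn_secant {s : Set ℝ} {f : ℝ → ℝ} (hf : StrictConvexOn ℝ s f)
    {a : ℝ} (ha : a ∈ s) : StrictMonoOn (fun x => (f x - f a) / (x - a)) (s \ {a}) :=
  fun _ hx _ hy hxy => hf.secant_strict_mono ha hx.1 hy.1 hx.2 hy.2 hxy

theorem strictMonoOn_rpow_sub_one_div_sub_one {r : ℝ} (hr : 1 < r) :
    StrictMonoOn (fun u : ℝ => (u ^ r - 1) / (u - 1)) (Ioo 0 1) := by
  have h := (strictConvexOn_rpow hr).strictMonoOn_secant (a := 1) (by simp)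
  simp only [Real.one_rpow] at h
  exact h.mono fun u hu => ⟨hu.1.le, hu.2.ne⟩

theorem f_strictMono (A B : ℝ) (hA : 1 < A) (hAB : A < B) :
    StrictMonoOn (fun x : ℝ => (x ^ B - x ^ A) / (x ^ A - 1)) (Set.Ioo 0 1) := by
  have hA0 : 0 < A := by linarith
  have hrewrite : ∀ x ∈ Ioo (0 : ℝ) 1,
      (x ^ B - x ^ A) / (x ^ A - 1) = ((x ^ A) ^ (B / A) - 1) / (x ^ A - 1) - 1 := by
    intro x hx
    have hxA : x ^ A - 1 ≠ 0 := (sub_neg.2 (Real.rpow_lt_one hx.1.le hx.2 hA0)).ne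
    rw [← Real.rpow_mul hx.1.le, mul_div_cancel₀ B hA0.ne']
    field_simp
    ring
  have hpow : StrictMonoOn (fun x : ℝ => x ^ A) (Ioo 0 1) :=
    (Real.strictMonoOn_rpow_Ici_of_exponent_pos hA0).mono fun _ hx => le_of_lt hx.1
  have hmaps : MapsTo (fun x : ℝ => x ^ A) (Ioo 0 1) (Ioo 0 1) :=
    fun x hx => ⟨Real.rpow_pos_of_pos hx.1 A, Real.rpow_lt_one hx.1.le hx.2 hA0⟩
  have hquot := (strictMonoOn_rpow_sub_one_div_sub_one
    ((one_lt_div hA0).2 hAB)).comp hpow hmaps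
  intro x hx y hy hxy
  simp only [hrewrite x hx, hrewrite y hy]
  exact sub_lt_sub_right (hquot hx hy hxy) 1
end

section
/- Let $a, b, c > 0$ be pairwise distinct real numbers, and define $w(x) = \big(\exp(-x^2/a^2),\ \exp(-x^2/b^2),\ \exp(-x^2/c^2)\big) \in \mathbb{R}^3$. Then for any pairwise distinct positive reals $x_1, x_2, x_3$, the set $\{w(x_1), w(x_2), w(x_3)\}$ is linearly independent in $\mathbb{R}^3$. -/
/-!
Write `w(xⱼ)ᵢ = exp (rⱼ * sᵢ)` with the distinct rates `rⱼ = -xⱼ²` and the distinct points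
`sᵢ = 1 / aᵢ²`. A vanishing linear combination of the `w(xⱼ)` is then an exponential sum
`∑ cⱼ exp (rⱼ s)` with three distinct zeros. An exponential sum with `n` distinct rates and `n`
zeros vanishes identically: dividing by `exp (r₀ s)` makes its first term constant, and Rolle's
theorem turns the `n` zeros into `n - 1` zeros of the derivative, an exponential sum with the
`n - 1` distinct rates `rⱼ - r₀`.
-/

open Real Finset Function

theorem hasDerivAt_sum_mul_exp {n : ℕ} (r c : Fin n → ℝ) (s : ℝ) :
    HasDerivAt (fun s => ∑ i, c i * exp (r i * s)) (∑ i, c i * r i * exp (r i * s)) s :=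
  (HasDerivAt.fun_sum fun i _ =>
    (((hasDerivAt_id' s).const_mul (r i)).exp).const_mul (c i)).congr_deriv
      (sum_congr rfl fun i _ => by ring)

theorem exists_card_le_card_deriv_zeros_add_one {f f' : ℝ → ℝ}
    (hf : ∀ x, HasDerivAt f (f' x) x) {S : Finset ℝ} (hS : ∀ s ∈ S, f s = 0) :
    ∃ T : Finset ℝ, S.card ≤ T.card + 1 ∧ ∀ t ∈ T, f' t = 0 := by
  classical
  have rolle : ∀ p : ℝ × ℝ,
      ∃ z, p.1 ∈ S → p.2 ∈ S → p.1 < p.2 → z ∈ Set.Ioo p.1 p.2 ∧ f' z = 0 := by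
    intro ⟨x, y⟩
    by_cases h : x ∈ S ∧ y ∈ S ∧ x < y
    · obtain ⟨z, hz, hz'⟩ := exists_hasDerivAt_eq_zero h.2.2
        (fun t _ => (hf t).continuousAt.continuousWithinAt)
        ((hS x h.1).trans (hS y h.2.1).symm) (fun t _ => hf t)
      exact ⟨z, fun _ _ _ => ⟨hz, hz'⟩⟩
    · exact ⟨0, fun hx hy hxy => absurd ⟨hx, hy, hxy⟩ h⟩
  choose ξ hξ using rolle
  refine ⟨((S ×ˢ S).filter fun p => p.1 < p.2).image ξ, card_le_of_interleaved ?_, ?_⟩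
  · intro x hx y hy hxy _
    exact ⟨ξ (x, y), mem_image_of_mem _ (by simp [hx, hy, hxy]), hξ (x, y) hx hy hxy |>.1⟩
  · simp only [mem_image, mem_filter, mem_product, Prod.exists]
    rintro _ ⟨x, y, ⟨⟨hx, hy⟩, hxy⟩, rfl⟩
    exact (hξ (x, y) hx hy hxy).2

theorem eq_zero_of_sum_mul_exp_eq_zero {n : ℕ} {r c : Fin n → ℝ} (hr : Injective r)
    {S : Finset ℝ} (hS : n ≤ S.card) (hz : ∀ s ∈ S, ∑ i, c i * exp (r i * s) = 0) : c = 0 := by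
  induction n generalizing S with
  | zero => exact funext fun i => i.elim0
  | succ n ih =>
    have hr0 : ∀ i : Fin n, r i.succ - r 0 ≠ 0 := fun i =>
      sub_ne_zero.2 (hr.ne (Fin.succ_ne_zero i))
    have hshift : ∀ s ∈ S, ∑ i, c i * exp ((r i - r 0) * s) = 0 := fun s hs => by
      have : ∑ i, c i * exp ((r i - r 0) * s) = exp (-(r 0 * s)) * ∑ i, c i * exp (r i * s) := by
        rw [mul_sum]
        exact sum_congr rfl fun i _ => by rw [sub_mul, sub_eq_add_neg, exp_add]; ring
      rw [this, hz s hs, mul_zero]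
    obtain ⟨T, hST, hT⟩ := exists_card_le_card_deriv_zeros_add_one
      (hasDerivAt_sum_mul_exp (fun i => r i - r 0) c) hshift
    have hsucc : ∀ i : Fin n, c i.succ = 0 := by
      have := ih (S := T) (r := fun i => r i.succ - r 0)
        (c := fun i => c i.succ * (r i.succ - r 0))
        (fun i j h => Fin.succ_injective _ (hr (sub_left_inj.1 h))) (by omega)
        (fun t ht => by simpa [Fin.sum_univ_succ] using hT t ht)
      exact fun i => (mul_eq_zero.1 (congrFun this i)).resolve_right (hr0 i)
    obtain ⟨s, hs⟩ := card_pos.1 (by omega : 0 < S.card)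
    have h0 : c 0 = 0 := by
      simpa [Fin.sum_univ_succ, hsucc, exp_ne_zero] using hz s hs
    exact funext fun i => Fin.cases h0 hsucc i

theorem linearIndependent_exp_mul {n : ℕ} {r s : Fin n → ℝ} (hr : Injective r)
    (hs : Injective s) : LinearIndependent ℝ fun j i => exp (r j * s i) := by
  refine Fintype.linearIndependent_iff.2 fun c hc => congrFun ?_
  refine eq_zero_of_sum_mul_exp_eq_zero hr (S := univ.image s)
    (by rw [card_image_of_injective _ hs, card_fin]) ?_
  simp only [mem_image, mem_univ, true_and, forall_exists_index, forall_apply_eq_imp_iff]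
  exact fun i => by simpa using congrFun hc i

theorem injective_vecCons₃ {α : Type*} {u v w : α} (huv : u ≠ v) (hvw : v ≠ w) (hwu : w ≠ u) :
    Injective ![u, v, w] := by
  intro i j
  fin_cases i <;> fin_cases j <;> simp [huv, hvw, hwu, huv.symm, hvw.symm, hwu.symm]

theorem w_linearIndependent (a b c : ℝ) (ha : 0 < a) (hb : 0 < b) (hc : 0 < c)
    (hab : a ≠ b) (hbc : b ≠ c) (hca : c ≠ a)
    (x₁ x₂ x₃ : ℝ) (hx₁ : 0 < x₁) (hx₂ : 0 < x₂) (hx₃ : 0 < x₃)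
    (h₁₂ : x₁ ≠ x₂) (h₂₃ : x₂ ≠ x₃) (h₃₁ : x₃ ≠ x₁) :
    LinearIndependent ℝ
      (fun i : Fin 3 =>
        (fun x : ℝ =>
          (![Real.exp (-x ^ 2 / a ^ 2), Real.exp (-x ^ 2 / b ^ 2),
             Real.exp (-x ^ 2 / c ^ 2)] : Fin 3 → ℝ)) (![x₁, x₂, x₃] i)) := by
  have sq_ne {u v : ℝ} (hu : 0 < u) (hv : 0 < v) (huv : u ≠ v) : u ^ 2 ≠ v ^ 2 :=
    fun h => huv ((sq_eq_sq₀ hu.le hv.le).1 h)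
  have hr : Injective ![-x₁ ^ 2, -x₂ ^ 2, -x₃ ^ 2] := by
    refine injective_vecCons₃ ?_ ?_ ?_ <;> rw [Ne, neg_inj] <;> apply sq_ne <;> assumption
  have hs : Injective ![(a ^ 2)⁻¹, (b ^ 2)⁻¹, (c ^ 2)⁻¹] := by
    refine injective_vecCons₃ ?_ ?_ ?_ <;> rw [Ne, inv_inj] <;> apply sq_ne <;> assumption
  convert linearIndependent_exp_mul hr hs using 1
  ext j i
  fin_cases j <;> fin_cases i <;> simp [div_eq_mul_inv]
end

section
/- Let $l_{11}, l_{12}, l_{21}, l_{22} > 0$ be pairwise distinct, and let $0 < a_1 < a_2 < a_3$ be real numbers. Define $v(x) = \big(\exp(-x^2/l_{11}^2), \exp(-x^2/l_{12}^2), \exp(-x^2/l_{21}^2), \exp(-x^2/l_{22}^2)\big) \in \mathbb{R}^4$. Then the four vectors $v(0), v(a_1), v(a_2), v(a_3)$ are linearly independent, i.e., the $4 \times 4$ matrix with columns $v(0), v(a_1), v(a_2), v(a_3)$ has nonzero determinant. -/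
/-!
Entry `k` of the `i`-th vector is `exp (μ i * c k)` with `μ i = -aᵢ²` and `c k = l_k⁻²`, so a linear
relation `∑ gᵢ v(aᵢ) = 0` says that the exponential sum `x ↦ ∑ gᵢ exp (μ i x)`, with four distinct
exponents, vanishes at the four distinct points `c k`. An exponential sum with `n` terms and `n`
zeros is identically zero: multiplying by `exp (-μ a x)` and differentiating kills the `a`-term,
and by Rolle's theorem the derivative still has `n - 1` zeros.
-/

open Finset Function Real

section

variable {ι : Type*}

noncomputable def expSum (s : Finset ι) (μ g : ι → ℝ) (x : ℝ) : ℝ :=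
  ∑ i ∈ s, g i * exp (μ i * x)

theorem hasDerivAt_expSum (s : Finset ι) (μ g : ι → ℝ) (x : ℝ) :
    HasDerivAt (expSum s μ g) (expSum s μ (fun i => g i * μ i) x) x := by
  have hterm (i : ι) : HasDerivAt (fun y => g i * exp (μ i * y)) (g i * μ i * exp (μ i * x)) x :=
    (((hasDerivAt_id x).const_mul (μ i)).exp.const_mul (g i)).congr_deriv (by simp; ring)
  exact HasDerivAt.fun_sum fun i _ => hterm i

theorem hasDerivAt_exp_mul_expSum (s : Finset ι) (μ g : ι → ℝ) (b x : ℝ) :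
    HasDerivAt (fun y => exp (-b * y) * expSum s μ g y)
      (exp (-b * x) * expSum s μ (fun i => g i * (μ i - b)) x) x := by
  have hexp : HasDerivAt (fun y => exp (-b * y)) (exp (-b * x) * -b) x := by
    simpa using ((hasDerivAt_id x).const_mul (-b)).exp
  refine (hexp.mul (hasDerivAt_expSum s μ g x)).congr_deriv ?_
  simp only [expSum, mul_sum, ← sum_add_distrib]
  exact sum_congr rfl fun i _ => by ring

theorem exists_strictMono_deriv_eq_zero {f f' : ℝ → ℝ} (hf : ∀ x, HasDerivAt f (f' x) x)
    {n : ℕ} {c : Fin (n + 1) → ℝ} (hc : StrictMono c) (hz : ∀ k, f (c k) = 0) :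
    ∃ d : Fin n → ℝ, StrictMono d ∧ ∀ k, f' (d k) = 0 := by
  have hrolle (k : Fin n) : ∃ z ∈ Set.Ioo (c k.castSucc) (c k.succ), f' z = 0 :=
    exists_hasDerivAt_eq_zero (hc k.castSucc_lt_succ)
      (HasDerivAt.continuousOn fun x _ => hf x) ((hz _).trans (hz _).symm) fun x _ => hf x
  choose d hd hd' using hrolle
  refine ⟨d, fun k l hkl => ?_, hd'⟩
  calc d k < c k.succ := (hd k).2
    _ ≤ c l.castSucc := hc.monotone (Fin.succ_le_castSucc_iff.2 hkl)
    _ < d l := (hd l).1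

theorem eq_zero_of_expSum_eq_zero {μ : ι → ℝ} (hμ : Injective μ) (s : Finset ι) (g : ι → ℝ)
    {n : ℕ} (hn : #s ≤ n) {c : Fin n → ℝ} (hc : StrictMono c)
    (hz : ∀ k, expSum s μ g (c k) = 0) : ∀ i ∈ s, g i = 0 := by
  classical
  induction s using Finset.induction_on generalizing g n with
  | empty => simp
  | insert a s ha ih =>
    rw [card_insert_of_notMem ha] at hn
    obtain ⟨m, rfl⟩ := Nat.exists_eq_add_of_le' (Nat.one_le_of_lt hn)
    obtain ⟨d, hd, hd0⟩ := exists_strictMono_deriv_eq_zero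
      (hasDerivAt_exp_mul_expSum (insert a s) μ g (μ a)) hc (fun k => by rw [hz k, mul_zero])
    have hs : ∀ i ∈ s, g i * (μ i - μ a) = 0 := by
      refine ih _ (by omega) hd fun k => ?_
      have := (mul_eq_zero.1 (hd0 k)).resolve_left (exp_ne_zero _)
      rwa [expSum, sum_insert ha, sub_self, mul_zero, zero_mul, zero_add] at this
    have hgs (i : ι) (hi : i ∈ s) : g i = 0 :=
      (mul_eq_zero.1 (hs i hi)).resolve_right (sub_ne_zero.2 (hμ.ne (ne_of_mem_of_not_mem hi ha)))
    have hga : g a = 0 := by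
      have := hz 0
      rw [expSum, sum_insert ha, sum_eq_zero fun i hi => by rw [hgs i hi, zero_mul], add_zero] at this
      exact (mul_eq_zero.1 this).resolve_right (exp_ne_zero _)
    intro i hi
    rcases mem_insert.1 hi with rfl | hi
    exacts [hga, hgs i hi]

theorem linearIndependent_exp_mul_s13 [Fintype ι] {κ : Type*} [Fintype κ] {μ : ι → ℝ}
    (hμ : Injective μ) {c : κ → ℝ} (hc : Injective c) (hcard : Fintype.card ι ≤ Fintype.card κ) :
    LinearIndependent ℝ fun i k => exp (μ i * c k) := by
  classical
  rw [Fintype.linearIndependent_iff]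
  intro g hg i
  have hpts : #(univ.image c) = Fintype.card κ := by
    rw [card_image_of_injective _ hc, card_univ]
  refine eq_zero_of_expSum_eq_zero hμ univ g (hcard.trans hpts.ge)
    ((univ.image c).orderEmbOfFin rfl).strictMono (fun k => ?_) i (mem_univ i)
  obtain ⟨k', -, hk'⟩ := mem_image.1 ((univ.image c).orderEmbOfFin_mem rfl k)
  rw [← hk']
  simpa [expSum] using congrFun hg k'

end

theorem v_linearIndependent (l₁₁ l₁₂ l₂₁ l₂₂ : ℝ)
    (h₁ : 0 < l₁₁) (h₂ : 0 < l₁₂) (h₃ : 0 < l₂₁) (h₄ : 0 < l₂₂)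
    (hd₁ : l₁₁ ≠ l₁₂) (hd₂ : l₁₁ ≠ l₂₁) (hd₃ : l₁₁ ≠ l₂₂)
    (hd₄ : l₁₂ ≠ l₂₁) (hd₅ : l₁₂ ≠ l₂₂) (hd₆ : l₂₁ ≠ l₂₂)
    (a₁ a₂ a₃ : ℝ) (ha₁ : 0 < a₁) (ha₁₂ : a₁ < a₂) (ha₂₃ : a₂ < a₃) :
    LinearIndependent ℝ
      (fun i : Fin 4 =>
        (fun x : ℝ =>
          (![Real.exp (-x ^ 2 / l₁₁ ^ 2), Real.exp (-x ^ 2 / l₁₂ ^ 2),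
             Real.exp (-x ^ 2 / l₂₁ ^ 2), Real.exp (-x ^ 2 / l₂₂ ^ 2)] : Fin 4 → ℝ))
          (![0, a₁, a₂, a₃] i)) := by
  have hl : Injective ![l₁₁, l₁₂, l₂₁, l₂₂] := by
    simp only [Matrix.vecCons, Fin.cons_injective_iff]
    simp [Matrix.range_cons, injective_of_subsingleton, *]
  set l : Fin 4 → ℝ := ![l₁₁, l₁₂, l₂₁, l₂₂]
  set a : Fin 4 → ℝ := ![0, a₁, a₂, a₃]
  have hl_pos (k : Fin 4) : 0 < l k := by fin_cases k <;> assumption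
  have hμ : StrictAnti fun i => -a i ^ 2 := by
    refine Fin.strictAnti_iff_succ_lt.2 fun i => ?_
    fin_cases i <;> simp [a] <;> nlinarith
  have hc : Injective fun k => (l k ^ 2)⁻¹ := fun i j hij => by
    rw [inv_inj, pow_left_inj₀ (hl_pos i).le (hl_pos j).le two_ne_zero] at hij
    exact hl hij
  convert linearIndependent_exp_mul_s13 hμ.injective hc le_rfl using 2 with i
  ext k
  fin_cases k <;> simp [l, div_eq_mul_inv]
end

section
/- Let $\sigma_1, \sigma_2, l_1, l_2 > 0$ with $l_1 < l_2$, and $\sigma_3, \sigma_4, l_3, l_4 > 0$ with $l_3 < l_4$. Suppose $X \subseteq [0, \infty)$ is a set of nonnegative reals with $|X| \geq 4$, and for all $x \in X$: $\sigma_1^2 e^{-x^2/l_1^2} + \sigma_2^2 e^{-x^2/l_2^2} = \sigma_3^2 e^{-x^2/l_3^2} + \sigma_4^2 e^{-x^2/l_4^2}$. If additionally $0 \in X$ (and $X$ contains at least three distinct positive elements), then $(\sigma_1, l_1) = (\sigma_3, l_3)$ and $(\sigma_2, l_2) = (\sigma_4, l_4)$. -/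
/-!
With `t = x²` and rates `μ = -1/l²`, each side is an exponential sum `∑ cᵢ exp (μᵢ t)`. Such a sum
with at most `k` distinct rates that vanishes at `k` distinct points has all coefficients zero:
dividing by one exponential and differentiating removes one term, and by Rolle's theorem loses
only one zero. Applied at `0 < a² < b² < c²` to the difference of the two kernels, with coefficients
collected by rate, this shows that both sides carry the same coefficient at every rate; positivity
of the `σᵢ²` and the ordering of the bandwidths then match the terms up.
-/

open Real Finset Finsupp

theorem hasDerivAt_sum_mul_exp_s14 {ι : Type*} (s : Finset ι) (c μ : ι → ℝ) (x : ℝ) :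
    HasDerivAt (fun t => ∑ i ∈ s, c i * exp (μ i * t)) (∑ i ∈ s, c i * μ i * exp (μ i * x)) x :=
  HasDerivAt.fun_sum fun i _ =>
    (((hasDerivAt_id' x).const_mul (μ i)).exp.const_mul (c i)).congr_deriv (by ring)

theorem eq_zero_of_sum_mul_exp_eq_zero_s14 {n : ℕ} (c μ t : Fin n → ℝ) (hμ : Function.Injective μ)
    (ht : StrictMono t) (h : ∀ j, ∑ i, c i * exp (μ i * t j) = 0) : c = 0 := by
  induction n with
  | zero => exact funext fun i => i.elim0
  | succ n ih =>
    -- Dividing by `exp (μ 0 * t)` makes the `0`-th term constant, so differentiation kills it.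
    have hg : ∀ j, ∑ i, c i * exp ((μ i - μ 0) * t j) = 0 := fun j => by
      have : ∑ i, c i * exp ((μ i - μ 0) * t j) =
          exp (-(μ 0 * t j)) * ∑ i, c i * exp (μ i * t j) := by
        rw [Finset.mul_sum]
        refine Finset.sum_congr rfl fun i _ => ?_
        rw [mul_left_comm, ← exp_add]
        ring_nf
      rw [this, h j, mul_zero]
    have hrolle : ∀ j : Fin n, ∃ s ∈ Set.Ioo (t j.castSucc) (t j.succ),
        ∑ i, c i * (μ i - μ 0) * exp ((μ i - μ 0) * s) = 0 := fun j =>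
      exists_hasDerivAt_eq_zero (ht Fin.castSucc_lt_succ)
        (fun x _ => (hasDerivAt_sum_mul_exp_s14 _ c _ x).continuousAt.continuousWithinAt)
        ((hg _).trans (hg _).symm) (fun x _ => hasDerivAt_sum_mul_exp_s14 _ c _ x)
    choose s hs hs' using hrolle
    have hs_mono : StrictMono s := fun i j hij =>
      (hs i).2.trans_le (ht.monotone (Fin.succ_le_castSucc_iff.2 hij)) |>.trans (hs j).1
    have hsucc := ih (fun i => c i.succ * (μ i.succ - μ 0)) (fun i => μ i.succ - μ 0) s
      (fun i j hij => Fin.succ_injective _ (hμ (sub_left_injective hij))) hs_mono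
      (fun j => by simpa [Fin.sum_univ_succ] using hs' j)
    have hc_succ : ∀ i : Fin n, c i.succ = 0 := fun i =>
      (mul_eq_zero.1 (congrFun hsucc i)).resolve_right
        (sub_ne_zero.2 (hμ.ne (Fin.succ_ne_zero i)))
    have hc0 : c 0 = 0 := by simpa [Fin.sum_univ_succ, hc_succ] using hg 0
    funext i
    exact Fin.cases hc0 hc_succ i

theorem eq_zero_of_linearCombination_exp_eq_zero (c : ℝ →₀ ℝ) {m : ℕ} (t : Fin m → ℝ)
    (ht : StrictMono t) (hcard : #c.support ≤ m)
    (h : ∀ j, linearCombination ℝ (fun ν => exp (ν * t j)) c = 0) : c = 0 := by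
  set e := c.support.equivFin
  have hc := eq_zero_of_sum_mul_exp_eq_zero_s14 (fun i => c (e.symm i)) (fun i => e.symm i)
    (fun j => t (Fin.castLE hcard j)) (Subtype.val_injective.comp e.symm.injective)
    (ht.comp (Fin.strictMono_castLE hcard)) fun j => by
      rw [e.symm.sum_comp (fun ν => c ν * exp (ν * t (Fin.castLE hcard j))),
        sum_coe_sort c.support (fun ν => c ν * exp (ν * t (Fin.castLE hcard j))), ← h _,
        linearCombination_apply, Finsupp.sum]
      rfl
  ext ν
  by_contra hν
  exact hν (by simpa using congrFun hc (e ⟨ν, mem_support_iff.2 hν⟩))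

theorem Finsupp.eq_of_single_add_single_eq {α M : Type*} [LinearOrder α] [AddCommMonoid M]
    {a b c d : α} {u v w z : M} (hu : u ≠ 0) (hv : v ≠ 0) (hab : a < b) (hcd : c < d)
    (h : single a u + single b v = single c w + single d z) :
    a = c ∧ u = w ∧ b = d ∧ v = z := by
  have hsupp : ∀ x, (single a u + single b v) x ≠ 0 → x = c ∨ x = d := fun x hx => by
    by_contra! hne
    simp [h, hne.1.symm, hne.2.symm] at hx
  have ha := hsupp a (by simpa [single_apply, hab.ne'] using hu)
  have hb := hsupp b (by simpa [single_apply, hab.ne] using hv)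
  obtain ⟨rfl, rfl⟩ : a = c ∧ b = d := by
    rcases ha with rfl | rfl <;> rcases hb with rfl | rfl <;> first | exact ⟨rfl, rfl⟩ | order
  have hu := DFunLike.congr_fun h a
  have hv := DFunLike.congr_fun h b
  simp only [coe_add, Pi.add_apply, single_eq_same, single_eq_of_ne hab.ne,
    single_eq_of_ne hab.ne', add_zero, zero_add] at hu hv
  exact ⟨rfl, hu, rfl, hv⟩

theorem Finsupp.card_support_single_add_single_sub_le {α M : Type*} [AddCommGroup M]
    (a b c d : α) (u v w z : M) :
    #(single a u + single b v - (single c w + single d z)).support ≤ 4 := by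
  classical
  refine (card_le_card (t := {a, b, c, d}) fun x hx => ?_).trans card_le_four
  by_contra! hne
  simp only [mem_insert, mem_singleton, not_or] at hne
  simp [Ne.symm hne.1, Ne.symm hne.2.1, Ne.symm hne.2.2.1, Ne.symm hne.2.2.2] at hx

theorem strictMonoOn_neg_inv_sq : StrictMonoOn (fun l : ℝ => -(l ^ 2)⁻¹) (Set.Ioi 0) :=
  fun _ hx _ _ hxy =>
    neg_lt_neg (inv_strictAnti₀ (pow_pos hx 2) (pow_lt_pow_left₀ hxy (le_of_lt hx) two_ne_zero))

theorem two_RBF_identifiable_general (σ₁ σ₂ σ₃ σ₄ l₁ l₂ l₃ l₄ : ℝ)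
    (hσ₁ : 0 < σ₁) (hσ₂ : 0 < σ₂) (hσ₃ : 0 < σ₃) (hσ₄ : 0 < σ₄)
    (hl₁ : 0 < l₁) (hl₃ : 0 < l₃)
    (h₁₂ : l₁ < l₂) (h₃₄ : l₃ < l₄)
    (X : Set ℝ) (h0 : (0 : ℝ) ∈ X)
    (hthree : ∃ a b c : ℝ, a ∈ X ∧ b ∈ X ∧ c ∈ X ∧ 0 < a ∧ a < b ∧ b < c)
    (heq : ∀ x ∈ X,
      σ₁ ^ 2 * Real.exp (-x ^ 2 / l₁ ^ 2) + σ₂ ^ 2 * Real.exp (-x ^ 2 / l₂ ^ 2) =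
      σ₃ ^ 2 * Real.exp (-x ^ 2 / l₃ ^ 2) + σ₄ ^ 2 * Real.exp (-x ^ 2 / l₄ ^ 2)) :
    σ₁ = σ₃ ∧ l₁ = l₃ ∧ σ₂ = σ₄ ∧ l₂ = l₄ := by
  obtain ⟨a, b, c, ha, hb, hc, ha₀, hab, hbc⟩ := hthree
  -- Indexing coefficients by the rate `-1/l²` merges the terms of coinciding bandwidths.
  set C : ℝ →₀ ℝ := single (-(l₁ ^ 2)⁻¹) (σ₁ ^ 2) + single (-(l₂ ^ 2)⁻¹) (σ₂ ^ 2) -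
    (single (-(l₃ ^ 2)⁻¹) (σ₃ ^ 2) + single (-(l₄ ^ 2)⁻¹) (σ₄ ^ 2)) with hC
  have hvanish : ∀ x ∈ X, linearCombination ℝ (fun ν => exp (ν * x ^ 2)) C = 0 := fun x hx => by
    simp only [hC, map_sub, map_add, linearCombination_single, smul_eq_mul, neg_mul, ← neg_div,
      inv_mul_eq_div]
    rw [heq x hx, sub_self]
  have hpts : StrictMono ![0, a ^ 2, b ^ 2, c ^ 2] := by
    refine Fin.strictMono_iff_lt_succ.2 fun i => ?_
    fin_cases i
    · simpa using pow_pos ha₀ 2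
    · simpa using pow_lt_pow_left₀ hab ha₀.le two_ne_zero
    · simpa using pow_lt_pow_left₀ hbc (ha₀.trans hab).le two_ne_zero
  have hC0 : C = 0 := by
    refine eq_zero_of_linearCombination_exp_eq_zero C _ hpts
      (card_support_single_add_single_sub_le ..) fun j => ?_
    fin_cases j
    · simpa using hvanish 0 h0
    · exact hvanish a ha
    · exact hvanish b hb
    · exact hvanish c hc
  have hμ := strictMonoOn_neg_inv_sq
  have hl₂ : l₂ ∈ Set.Ioi 0 := hl₁.trans h₁₂
  have hl₄ : l₄ ∈ Set.Ioi 0 := hl₃.trans h₃₄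
  obtain ⟨hl₁₃, hσ₁₃, hl₂₄, hσ₂₄⟩ := Finsupp.eq_of_single_add_single_eq (by positivity)
    (by positivity) (hμ hl₁ hl₂ h₁₂) (hμ hl₃ hl₄ h₃₄) (sub_eq_zero.1 hC0)
  exact ⟨(sq_eq_sq₀ hσ₁.le hσ₃.le).1 hσ₁₃, hμ.injOn hl₁ hl₃ hl₁₃,
    (sq_eq_sq₀ hσ₂.le hσ₄.le).1 hσ₂₄, hμ.injOn hl₂ hl₄ hl₂₄⟩

theorem two_RBF_identifiable (σ₁ σ₂ σ₃ σ₄ l₁ l₂ l₃ l₄ : ℝ)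
    (hσ₁ : 0 < σ₁) (hσ₂ : 0 < σ₂) (hσ₃ : 0 < σ₃) (hσ₄ : 0 < σ₄)
    (hl₁ : 0 < l₁) (hl₂ : 0 < l₂) (hl₃ : 0 < l₃) (hl₄ : 0 < l₄)
    (h₁₂ : l₁ < l₂) (h₃₄ : l₃ < l₄)
    (X : Set ℝ) (hX : X ⊆ Set.Ici 0) (h0 : (0 : ℝ) ∈ X)
    (hthree : ∃ a b c : ℝ, a ∈ X ∧ b ∈ X ∧ c ∈ X ∧ 0 < a ∧ a < b ∧ b < c)
    (heq : ∀ x ∈ X,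
      σ₁ ^ 2 * Real.exp (-x ^ 2 / l₁ ^ 2) + σ₂ ^ 2 * Real.exp (-x ^ 2 / l₂ ^ 2) =
      σ₃ ^ 2 * Real.exp (-x ^ 2 / l₃ ^ 2) + σ₄ ^ 2 * Real.exp (-x ^ 2 / l₄ ^ 2)) :
    σ₁ = σ₃ ∧ l₁ = l₃ ∧ σ₂ = σ₄ ∧ l₂ = l₄ :=
  two_RBF_identifiable_general σ₁ σ₂ σ₃ σ₄ l₁ l₂ l₃ l₄ hσ₁ hσ₂ hσ₃ hσ₄ hl₁ hl₃ h₁₂ h₃₄ X h0 hthree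
    heq
end

section
/- Let $p > 0$ and let $X \subseteq [0, \infty)$ be a finite set of the form $X = \{|x_i - x_j| : 1 \leq i, j \leq n\}$ for reals $x_1 < x_2 < \cdots < x_n$. Suppose there exist $\alpha, \beta \in X$ with $\alpha/p \in \mathbb{N}_{>0}$ and $\beta/p \notin \mathbb{N}$. Then there exist a positive integer $m$ and a real $q > 0$ with $q/p \notin \mathbb{N}$ such that either $\{0, mp, q, mp + q\} \subseteq X$ or $\{0, q, mp - q, mp\} \subseteq X$ (with $0 < q < mp$ in the second case). -/
/-!
If `β = |x a - x b|` is not a multiple of `p`, then for any base point `u` one of `x a - u`,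
`x b - u` is not a multiple of `p` either. Take `u < v` with `v - u = α = m p` and such a point
`c`. Then `c` is neither `u` nor `v`, and the three points `u, v, c` in increasing order give the
required pattern: `c < u` or `v < c` yields `{0, m p, q, m p + q}`, and `u < c < v` yields
`{0, q, m p - q, m p}`.
-/

open AddSubgroup

section AbsDiffs

variable {ι α : Type*} [AddCommGroup α] [LinearOrder α] (x : ι → α)

def absDiffs : Set α := {d | ∃ i j : ι, d = |x i - x j|}

variable {x}

theorem exists_sub_notMem_of_abs_sub_notMem {G : AddSubgroup α} {a b : ι}
    (h : |x a - x b| ∉ G) (u : α) : ∃ c : ι, x c - u ∉ G := by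
  by_contra! hall
  exact h (abs_mem_iff.2 (by simpa using sub_mem (hall a) (hall b)))

variable [IsOrderedAddMonoid α]

theorem zero_mem_absDiffs (i : ι) : (0 : α) ∈ absDiffs x :=
  ⟨i, i, by simp⟩

theorem sub_mem_absDiffs {i j : ι} (h : x i ≤ x j) : x j - x i ∈ absDiffs x :=
  ⟨j, i, (abs_of_nonneg (sub_nonneg.2 h)).symm⟩

theorem exists_le_sub_eq_of_mem_absDiffs {d : α} (h : d ∈ absDiffs x) :
    ∃ i j : ι, x i ≤ x j ∧ x j - x i = d := by
  obtain ⟨i, j, rfl⟩ := h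
  rcases le_total (x i) (x j) with hij | hji
  · exact ⟨i, j, hij, by rw [abs_sub_comm, abs_of_nonneg (sub_nonneg.2 hij)]⟩
  · exact ⟨j, i, hji, by rw [abs_of_nonneg (sub_nonneg.2 hji)]⟩

theorem exists_lag_config {G : AddSubgroup α} {u v c : ι} (huv : x u < x v)
    (hvu : x v - x u ∈ G) (hcu : x c - x u ∉ G) :
    ∃ q : α, 0 < q ∧ q ∉ G ∧
      (({0, x v - x u, q, x v - x u + q} : Set α) ⊆ absDiffs x ∨
        (q < x v - x u ∧ ({0, q, x v - x u - q, x v - x u} : Set α) ⊆ absDiffs x)) := by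
  have hcv : x c - x v ∉ G := fun h => hcu (by simpa using add_mem h hvu)
  simp only [Set.insert_subset_iff, Set.singleton_subset_iff]
  rcases lt_trichotomy (x c) (x u) with hc | hc | hc
  · refine ⟨x u - x c, sub_pos.2 hc, fun h => hcu (by simpa using neg_mem h), Or.inl
      ⟨zero_mem_absDiffs u, sub_mem_absDiffs huv.le, sub_mem_absDiffs hc.le, ?_⟩⟩
    simpa using sub_mem_absDiffs (hc.trans huv).le
  · exact absurd (by simp [hc]) hcu
  rcases lt_trichotomy (x c) (x v) with hc' | hc' | hc'
  · refine ⟨x c - x u, sub_pos.2 hc, hcu, Or.inr ⟨by simpa using hc', zero_mem_absDiffs u,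
      sub_mem_absDiffs hc.le, ?_, sub_mem_absDiffs huv.le⟩⟩
    simpa using sub_mem_absDiffs hc'.le
  · exact absurd (by simpa [hc'] using hvu) hcu
  · refine ⟨x c - x v, sub_pos.2 hc', hcv, Or.inl
      ⟨zero_mem_absDiffs u, sub_mem_absDiffs huv.le, sub_mem_absDiffs hc'.le, ?_⟩⟩
    simpa using sub_mem_absDiffs hc.le

end AbsDiffs

theorem exists_nat_eq_mul_of_mem_zmultiples {p q : ℝ} (hp : 0 < p) (hq : 0 ≤ q)
    (h : q ∈ zmultiples p) : ∃ k : ℕ, q = k * p := by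
  obtain ⟨k, rfl⟩ := mem_zmultiples_iff.1 h
  have hk : 0 ≤ k := by
    rw [zsmul_eq_mul] at hq
    exact_mod_cast nonneg_of_mul_nonneg_left hq hp
  exact ⟨k.toNat, by rw [zsmul_eq_mul, ← Int.cast_natCast, Int.toNat_of_nonneg hk]⟩

theorem exists_lag_structure_general (p : ℝ) (hp : 0 < p) (n : ℕ) (x : Fin n → ℝ)
    (X : Set ℝ)
    (hX : X = {d : ℝ | ∃ i j : Fin n, d = |x i - x j|})
    (α β : ℝ) (hα : α ∈ X) (hβ : β ∈ X)
    (hαp : ∃ k : ℕ, 0 < k ∧ α = k * p)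
    (hβp : ¬∃ k : ℕ, β = k * p) :
    ∃ m : ℕ, 0 < m ∧ ∃ q : ℝ, 0 < q ∧ (¬∃ k : ℕ, q = k * p) ∧
      (({0, m * p, q, m * p + q} : Set ℝ) ⊆ X ∨
        (q < m * p ∧ ({0, q, m * p - q, m * p} : Set ℝ) ⊆ X)) := by
  change X = absDiffs x at hX
  subst hX
  obtain ⟨m, hm, rfl⟩ := hαp
  obtain ⟨u, v, -, hvu⟩ := exists_le_sub_eq_of_mem_absDiffs hα
  have huv : x u < x v := sub_pos.1 (hvu ▸ by positivity)
  obtain ⟨a, b, rfl⟩ := hβ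
  have hβG : |x a - x b| ∉ zmultiples p := fun h =>
    hβp (exists_nat_eq_mul_of_mem_zmultiples hp (abs_nonneg _) h)
  obtain ⟨c, hc⟩ := exists_sub_notMem_of_abs_sub_notMem hβG (x u)
  obtain ⟨q, hq, hqG, hconfig⟩ :=
    exists_lag_config huv (hvu ▸ by exact_mod_cast intCast_mul_mem_zmultiples p m) hc
  refine ⟨m, hm, q, hq, fun ⟨k, hk⟩ => hqG ?_, hvu ▸ hconfig⟩
  exact hk ▸ by exact_mod_cast intCast_mul_mem_zmultiples p k

theorem exists_lag_structure (p : ℝ) (hp : 0 < p) (n : ℕ) (x : Fin n → ℝ)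
    (hmono : StrictMono x) (X : Set ℝ)
    (hX : X = {d : ℝ | ∃ i j : Fin n, d = |x i - x j|})
    (α β : ℝ) (hα : α ∈ X) (hβ : β ∈ X)
    (hαp : ∃ k : ℕ, 0 < k ∧ α = k * p)
    (hβp : ¬∃ k : ℕ, β = k * p) :
    ∃ m : ℕ, 0 < m ∧ ∃ q : ℝ, 0 < q ∧ (¬∃ k : ℕ, q = k * p) ∧
      (({0, m * p, q, m * p + q} : Set ℝ) ⊆ X ∨
        (q < m * p ∧ ({0, q, m * p - q, m * p} : Set ℝ) ⊆ X)) :=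
  exists_lag_structure_general p hp n x X hX α β hα hβ hαp hβp
end

section
/- Let $p > 0$, $m \in \mathbb{N}_{>0}$, $q > 0$ with $q/p \notin \mathbb{Z}$, and let $l_1 \neq l_2$, $s_1 \neq s_2$ be positive reals. Define $v(x) = \big(\exp(-x^2/l_1^2), \exp(-x^2/l_2^2), \exp(\cos(2\pi x/p)/s_1^2), \exp(\cos(2\pi x/p)/s_2^2)\big) \in \mathbb{R}^4$. Then the four vectors $v(0), v(q), v(mp), v(mp+q)$ are linearly independent. -/
/-!
The last two coordinates only see `cos (2πx/p)`, which is `1` at `0` and `mp` and equals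
`c = cos (2πq/p) ≠ 1` at `q` and `mp + q`. As `s₁² ≠ s₂²`, the vectors `(e^{1/s₁²}, e^{1/s₂²})` and
`(e^{c/s₁²}, e^{c/s₂²})` are independent, so a vanishing combination `∑ gᵢ vᵢ` has `g₂ = -g₀` and
`g₃ = -g₁`; it remains to show that `v(0) - v(mp)` and `v(q) - v(mp+q)` are independent in the
first two coordinates. Putting `z = exp (-u/l₁²)`, the second Gaussian is `z ^ (l₁²/l₂²)`, strictly
convex in `z` when `l₂ < l₁`, and the relevant `2 × 2` determinant compares two secant slopes of
this power.
-/

open Real Set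

theorem linearIndependent_pair_of_det_ne_zero {R : Type*} [CommRing R] [IsDomain R]
    {x y : Fin 2 → R} (h : x 0 * y 1 - x 1 * y 0 ≠ 0) : LinearIndependent R ![x, y] :=
  Matrix.linearIndependent_rows_of_det_ne_zero (A := Matrix.of ![x, y])
    (by rwa [Matrix.det_fin_two])

theorem LinearIndependent.pair_of_map {R M N : Type*} [Ring R] [AddCommGroup M] [Module R M]
    [AddCommGroup N] [Module R N] {x y : M} (f : M →ₗ[R] N)
    (h : LinearIndependent R ![f x, f y]) : LinearIndependent R ![x, y] :=
  LinearIndependent.pair_iff.2 fun s t hst ↦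
    LinearIndependent.pair_iff.1 h s t (by simpa using congrArg f hst)

theorem linearIndependent_fin_four_of_map_eq {R M N : Type*} [CommRing R] [AddCommGroup M]
    [Module R M] [AddCommGroup N] [Module R N] {u : Fin 4 → M} (f : M →ₗ[R] N)
    (h₀₂ : f (u 0) = f (u 2)) (h₁₃ : f (u 1) = f (u 3))
    (hf : LinearIndependent R ![f (u 0), f (u 1)])
    (hdiff : LinearIndependent R ![u 0 - u 2, u 1 - u 3]) : LinearIndependent R u := by
  rw [Fintype.linearIndependent_iff]
  intro g hg
  rw [Fin.sum_univ_four] at hg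
  obtain ⟨h₀, h₁⟩ : g 0 + g 2 = 0 ∧ g 1 + g 3 = 0 := by
    refine LinearIndependent.pair_iff.1 hf _ _ ?_
    have := congrArg f hg
    simp only [map_add, map_smul, map_zero, ← h₀₂, ← h₁₃] at this
    rw [← this]; module
  obtain ⟨h₂, h₃⟩ : g 0 = 0 ∧ g 1 = 0 := by
    refine LinearIndependent.pair_iff.1 hdiff _ _ ?_
    rw [← hg, eq_neg_of_add_eq_zero_right h₀, eq_neg_of_add_eq_zero_right h₁]; module
  intro i
  fin_cases i
  · exact h₂
  · exact h₃
  · simpa [h₂] using h₀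
  · simpa [h₃] using h₁

theorem StrictConvexOn.secant_lt_secant {𝕜 : Type*} [Field 𝕜] [LinearOrder 𝕜]
    [IsStrictOrderedRing 𝕜] {s : Set 𝕜} {f : 𝕜 → 𝕜} (hf : StrictConvexOn 𝕜 s f) {a b c d : 𝕜}
    (ha : a ∈ s) (hb : b ∈ s) (hc : c ∈ s) (hd : d ∈ s) (hab : a < b) (hbd : b < d)
    (hac : a ≤ c) (hcd : c < d) :
    (f b - f a) / (b - a) < (f d - f c) / (d - c) := by
  have hda : (f a - f d) / (a - d) ≤ (f c - f d) / (c - d) :=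
    hf.convexOn.secant_mono hd ha hc (by linarith) hcd.ne hac
  calc (f b - f a) / (b - a) < (f d - f a) / (d - a) :=
        hf.secant_strict_mono ha hb hd hab.ne' (by linarith) hbd
    _ ≤ (f d - f c) / (d - c) := by
        rwa [← neg_div_neg_eq, neg_sub, neg_sub, ← neg_div_neg_eq (f c - f d), neg_sub,
          neg_sub] at hda

theorem exp_neg_div_sq_secant_lt {l₁ l₂ a b c : ℝ} (hl₂ : 0 < l₂) (hl : l₂ < l₁) (ha : 0 < a)
    (hb : 0 < b) (hbc : b < c) (hac : a ≤ c) :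
    (1 - exp (-a / l₁ ^ 2)) * (exp (-b / l₂ ^ 2) - exp (-c / l₂ ^ 2)) <
      (1 - exp (-a / l₂ ^ 2)) * (exp (-b / l₁ ^ 2) - exp (-c / l₁ ^ 2)) := by
  have hl₁ : 0 < l₁ := hl₂.trans hl
  have hr : 1 < l₁ ^ 2 / l₂ ^ 2 := (one_lt_div (by positivity)).2 (by gcongr)
  have hpow (u : ℝ) : exp (-u / l₁ ^ 2) ^ (l₁ ^ 2 / l₂ ^ 2) = exp (-u / l₂ ^ 2) := by
    rw [← exp_mul]; congr 1; field_simp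
  have hz_anti : StrictAnti fun u ↦ exp (-u / l₁ ^ 2) := fun u v huv ↦ exp_lt_exp.2 (by gcongr)
  have hz_lt_one {u : ℝ} (hu : 0 < u) : exp (-u / l₁ ^ 2) < 1 := by simpa using hz_anti hu
  have key := (strictConvexOn_rpow hr).secant_lt_secant (exp_pos _).le (exp_pos _).le
    (exp_pos _).le (mem_Ici.2 zero_le_one) (hz_anti hbc) (hz_lt_one hb) (hz_anti.antitone hac)
    (hz_lt_one ha)
  simp only [hpow, one_rpow] at key
  rw [div_lt_div_iff₀ (sub_pos.2 (hz_anti hbc)) (sub_pos.2 (hz_lt_one ha))] at key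
  linarith

theorem exp_neg_div_sq_det_ne_zero {l₁ l₂ a b c : ℝ} (hl₁ : 0 < l₁) (hl₂ : 0 < l₂) (hl : l₁ ≠ l₂)
    (ha : 0 < a) (hb : 0 < b) (hbc : b < c) (hac : a ≤ c) :
    (1 - exp (-a / l₁ ^ 2)) * (exp (-b / l₂ ^ 2) - exp (-c / l₂ ^ 2)) -
      (1 - exp (-a / l₂ ^ 2)) * (exp (-b / l₁ ^ 2) - exp (-c / l₁ ^ 2)) ≠ 0 := by
  rcases hl.lt_or_gt with h | h
  · exact (sub_pos.2 (exp_neg_div_sq_secant_lt hl₁ h ha hb hbc hac)).ne'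
  · exact (sub_neg.2 (exp_neg_div_sq_secant_lt hl₂ h ha hb hbc hac)).ne

theorem exp_div_mul_exp_div_sub_ne_zero {x y u v : ℝ} (hxy : x ≠ y) (hu : u ≠ 0) (hv : v ≠ 0)
    (huv : u ≠ v) : exp (x / u) * exp (y / v) - exp (x / v) * exp (y / u) ≠ 0 := by
  rw [sub_ne_zero, ← exp_add, ← exp_add, exp_injective.ne_iff]
  intro h
  field_simp at h
  have : (x - y) * (v - u) = 0 := by linear_combination h
  rcases mul_eq_zero.1 this with h' | h'
  · exact hxy (sub_eq_zero.1 h')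
  · exact huv (sub_eq_zero.1 h').symm

theorem cos_two_pi_mul_nat_mul_add_div {p : ℝ} (hp : p ≠ 0) (n : ℕ) (x : ℝ) :
    cos (2 * π * (n * p + x) / p) = cos (2 * π * x / p) := by
  rw [show 2 * π * (n * p + x) / p = 2 * π * x / p + n * (2 * π) by field_simp; ring,
    cos_add_nat_mul_two_pi]

theorem cos_two_pi_mul_div_ne_one {p q : ℝ} (hp : p ≠ 0) (hqp : ¬∃ k : ℤ, q = k * p) :
    cos (2 * π * q / p) ≠ 1 := by
  rw [Ne, cos_eq_one_iff]
  rintro ⟨k, hk⟩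
  exact hqp ⟨k, by field_simp at hk; linarith⟩

theorem mixed_vectors_linearIndependent (p : ℝ) (hp : 0 < p) (m : ℕ) (hm : 0 < m)
    (q : ℝ) (hq : 0 < q) (hqp : ¬∃ k : ℤ, q = k * p)
    (l₁ l₂ s₁ s₂ : ℝ) (hl₁ : 0 < l₁) (hl₂ : 0 < l₂) (hs₁ : 0 < s₁) (hs₂ : 0 < s₂)
    (hl : l₁ ≠ l₂) (hs : s₁ ≠ s₂) :
    LinearIndependent ℝ
      (fun i : Fin 4 =>
        (fun x : ℝ =>
          (![Real.exp (-x ^ 2 / l₁ ^ 2), Real.exp (-x ^ 2 / l₂ ^ 2),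
             Real.exp (Real.cos (2 * Real.pi * x / p) / s₁ ^ 2),
             Real.exp (Real.cos (2 * Real.pi * x / p) / s₂ ^ 2)] : Fin 4 → ℝ))
          (![0, q, m * p, m * p + q] i)) := by
  have hmp : 0 < (m : ℝ) * p := mul_pos (Nat.cast_pos.2 hm) hp
  have hcos_mp : cos (2 * π * (m * p) / p) = 1 := by
    simpa using cos_two_pi_mul_nat_mul_add_div hp.ne' m 0
  refine linearIndependent_fin_four_of_map_eq (LinearMap.funLeft ℝ ℝ ![2, 3]) ?_ ?_ ?_ ?_
  · ext i; fin_cases i <;> simp [hcos_mp]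
  · ext i; fin_cases i <;> simp [cos_two_pi_mul_nat_mul_add_div hp.ne']
  · have hs_sq : s₁ ^ 2 ≠ s₂ ^ 2 := by rwa [Ne, pow_left_inj₀ hs₁.le hs₂.le two_ne_zero]
    refine linearIndependent_pair_of_det_ne_zero ?_
    simpa [hcos_mp] using
      exp_div_mul_exp_div_sub_ne_zero (cos_two_pi_mul_div_ne_one hp.ne' hqp).symm
        (pow_pos hs₁ 2).ne' (pow_pos hs₂ 2).ne' hs_sq
  · refine (linearIndependent_pair_of_det_ne_zero ?_).pair_of_map
      (LinearMap.funLeft ℝ ℝ ![0, 1])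
    simpa using exp_neg_div_sq_det_ne_zero (c := (m * p + q) ^ 2) hl₁ hl₂ hl (pow_pos hmp 2)
      (pow_pos hq 2) (by nlinarith) (by nlinarith)
end

section
/- Let $p, m, q, l_1, l_2$ be as follows: $p > 0$, $m$ a positive integer, $q > 0$, and $l_1, l_2 > 0$ with $l_1 \neq l_2$. Then the $2 \times 2$ matrix $B = \begin{pmatrix} e^{-m^2p^2/l_1^2} - 1 & e^{-(mp+q)^2/l_1^2} - e^{-q^2/l_1^2} \\ e^{-m^2p^2/l_2^2} - 1 & e^{-(mp+q)^2/l_2^2} - e^{-q^2/l_2^2} \end{pmatrix}$ satisfies $\det B \neq 0$. -/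
/-!
With `s = 1 / l ^ 2`, `a = (m p) ^ 2`, `c = q ^ 2` and `d = (m p + q) ^ 2 - q ^ 2 ≥ a`, the
ratio of the second to the first entry of a row is
`F s = exp (-c s) * (1 - exp (-d s)) / (1 - exp (-a s))`, so `det B = 0` would force
`F s₁ = F s₂`. But `F` is strictly decreasing on `(0, ∞)`: the factor `exp (-c s)` is, and the
quotient is nonincreasing because its derivative has the sign of
`d (exp (a s) - 1) - a (exp (d s) - 1) ≤ 0`, which is the monotonicity of the secant slopes
of the convex function `exp` through `0`.
-/

open Real Set

theorem exp_sub_one_div_le_exp_sub_one_div {x y : ℝ} (hx : 0 < x) (hxy : x ≤ y) :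
    (exp x - 1) / x ≤ (exp y - 1) / y := by
  simpa [exp_zero] using convexOn_exp.secant_mono (mem_univ 0) (mem_univ x) (mem_univ y)
    hx.ne' (hx.trans_le hxy).ne' hxy

theorem hasDerivAt_one_sub_exp_neg_mul (k s : ℝ) :
    HasDerivAt (fun s ↦ 1 - exp (-(k * s))) (k * exp (-(k * s))) s :=
  (((hasDerivAt_id' s).const_mul k).fun_neg.exp.const_sub 1).congr_deriv (by ring)

theorem one_sub_exp_neg_mul_pos {k s : ℝ} (hk : 0 < k) (hs : 0 < s) :
    0 < 1 - exp (-(k * s)) := by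
  simpa using mul_pos hk hs

/- Multiplied by `exp (a * s) * exp (d * s)`, this is the monotonicity of the slope
`(exp x - 1) / x` between `x = a * s` and `x = d * s`. -/
theorem mul_exp_neg_mul_one_sub_le {a d s : ℝ} (ha : 0 < a) (had : a ≤ d) (hs : 0 < s) :
    d * exp (-(d * s)) * (1 - exp (-(a * s))) ≤ a * exp (-(a * s)) * (1 - exp (-(d * s))) := by
  have hslope := exp_sub_one_div_le_exp_sub_one_div (mul_pos ha hs)
    (mul_le_mul_of_nonneg_right had hs.le)
  rw [div_le_div_iff₀ (by positivity) (by nlinarith)] at hslope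
  have hscaled : s * (d * (exp (a * s) - 1)) ≤ s * (a * (exp (d * s) - 1)) := by linarith
  rw [exp_neg, exp_neg]
  field_simp
  rw [mul_comm s a]
  exact le_of_mul_le_mul_left hscaled hs

theorem antitoneOn_one_sub_exp_neg_div {a d : ℝ} (ha : 0 < a) (had : a ≤ d) :
    AntitoneOn (fun s ↦ (1 - exp (-(d * s))) / (1 - exp (-(a * s)))) (Ioi 0) := by
  have hderiv : ∀ s ∈ Ioi (0 : ℝ),
      HasDerivAt (fun s ↦ (1 - exp (-(d * s))) / (1 - exp (-(a * s))))
      ((d * exp (-(d * s)) * (1 - exp (-(a * s))) - (1 - exp (-(d * s))) * (a * exp (-(a * s))))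
        / (1 - exp (-(a * s))) ^ 2) s := fun s hs ↦
    (hasDerivAt_one_sub_exp_neg_mul d s).div (hasDerivAt_one_sub_exp_neg_mul a s)
      (one_sub_exp_neg_mul_pos ha hs).ne'
  refine antitoneOn_of_deriv_nonpos (convex_Ioi 0)
    (fun s hs ↦ (hderiv s hs).continuousAt.continuousWithinAt) ?_ ?_ <;> rw [interior_Ioi]
  · exact fun s hs ↦ (hderiv s hs).differentiableAt.differentiableWithinAt
  · intro s hs
    rw [(hderiv s hs).deriv]
    refine div_nonpos_of_nonpos_of_nonneg ?_ (sq_nonneg _)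
    linarith [mul_exp_neg_mul_one_sub_le ha had hs]

theorem strictAntiOn_exp_neg_mul_mul_one_sub_exp_neg_div {a c d : ℝ} (ha : 0 < a) (hc : 0 < c)
    (had : a ≤ d) :
    StrictAntiOn (fun s ↦ exp (-(c * s)) * ((1 - exp (-(d * s))) / (1 - exp (-(a * s)))))
      (Ioi 0) := by
  intro s hs t ht hst
  have hpos : 0 < (1 - exp (-(d * t))) / (1 - exp (-(a * t))) :=
    div_pos (one_sub_exp_neg_mul_pos (ha.trans_le had) ht) (one_sub_exp_neg_mul_pos ha ht)
  calc exp (-(c * t)) * ((1 - exp (-(d * t))) / (1 - exp (-(a * t))))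
      < exp (-(c * s)) * ((1 - exp (-(d * t))) / (1 - exp (-(a * t)))) := by
        gcongr
    _ ≤ exp (-(c * s)) * ((1 - exp (-(d * s))) / (1 - exp (-(a * s)))) :=
        mul_le_mul_of_nonneg_left (antitoneOn_one_sub_exp_neg_div ha had hs ht hst.le)
          (exp_pos _).le

theorem Matrix.det_fin_two_of_ne_zero_of_div_ne {K : Type*} [Field K] {u₁ u₂ v₁ v₂ : K}
    (h₁ : u₁ ≠ 0) (h₂ : u₂ ≠ 0) (h : v₁ / u₁ ≠ v₂ / u₂) :
    !![u₁, v₁; u₂, v₂].det ≠ 0 := by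
  rw [Matrix.det_fin_two_of]
  intro hdet
  apply h
  rw [div_eq_div_iff h₁ h₂]
  linear_combination -hdet

theorem exp_neg_div_sub_exp_neg_div_div_exp_neg_div_sub_one (a b c x : ℝ) :
    (exp (-b / x) - exp (-c / x)) / (exp (-a / x) - 1) =
      exp (-(c * x⁻¹)) * ((1 - exp (-((b - c) * x⁻¹))) / (1 - exp (-(a * x⁻¹)))) := by
  rw [← neg_div_neg_eq, neg_sub, neg_sub, ← mul_div_assoc, mul_sub, mul_one, ← exp_add]
  ring_nf

theorem det_gaussian_increments_ne_zero {a b c : ℝ} (ha : 0 < a) (hc : 0 < c) (habc : a + c ≤ b)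
    {l₁ l₂ : ℝ} (hl₁ : 0 < l₁) (hl₂ : 0 < l₂) (hl : l₁ ≠ l₂) :
    !![exp (-a / l₁ ^ 2) - 1, exp (-b / l₁ ^ 2) - exp (-c / l₁ ^ 2);
       exp (-a / l₂ ^ 2) - 1, exp (-b / l₂ ^ 2) - exp (-c / l₂ ^ 2)].det ≠ 0 := by
  have hne {l : ℝ} (hl : 0 < l) : exp (-a / l ^ 2) - 1 ≠ 0 := sub_ne_zero.mpr
    (exp_lt_one_iff.mpr (div_neg_of_neg_of_pos (neg_neg_of_pos ha) (by positivity))).ne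
  refine Matrix.det_fin_two_of_ne_zero_of_div_ne (hne hl₁) (hne hl₂) ?_
  simp only [exp_neg_div_sub_exp_neg_div_div_exp_neg_div_sub_one]
  refine (strictAntiOn_exp_neg_mul_mul_one_sub_exp_neg_div ha hc (by linarith)).injOn.ne
    (mem_Ioi.mpr (by positivity)) (mem_Ioi.mpr (by positivity)) ?_
  rwa [Ne, inv_inj, sq_eq_sq₀ hl₁.le hl₂.le]

theorem detB2_ne_zero (p : ℝ) (hp : 0 < p) (m : ℕ) (hm : 0 < m) (q : ℝ) (hq : 0 < q)
    (l₁ l₂ : ℝ) (hl₁ : 0 < l₁) (hl₂ : 0 < l₂) (hl : l₁ ≠ l₂) :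
    Matrix.det
      !![Real.exp (-(m : ℝ) ^ 2 * p ^ 2 / l₁ ^ 2) - 1,
           Real.exp (-(m * p + q) ^ 2 / l₁ ^ 2) - Real.exp (-q ^ 2 / l₁ ^ 2);
         Real.exp (-(m : ℝ) ^ 2 * p ^ 2 / l₂ ^ 2) - 1,
           Real.exp (-(m * p + q) ^ 2 / l₂ ^ 2) - Real.exp (-q ^ 2 / l₂ ^ 2)] ≠ 0 := by
  have hmp : 0 < (m : ℝ) * p := mul_pos (Nat.cast_pos.mpr hm) hp
  rw [show -(m : ℝ) ^ 2 * p ^ 2 = -((m * p) ^ 2) by ring]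
  exact det_gaussian_increments_ne_zero (by positivity) (by positivity)
    (by nlinarith [mul_pos hmp hq]) hl₁ hl₂ hl
end

section
/- Let $p, l_1, l_2, s_1 > 0$ with $l_1 \neq l_2$, let $m$ be a positive integer, and $q > 0$ with $q/p \notin \mathbb{Z}$. Define $u(x) = \big(\exp(-x^2/l_1^2), \exp(-x^2/l_2^2), \exp(\cos(2\pi x/p)/s_1^2)\big) \in \mathbb{R}^3$. Then there exist no real numbers $\sigma_1, \sigma_2 > 0$ and $c \in \mathbb{R}$ such that $\sigma_1^2 \exp(-x^2/l_1^2) + c \exp(\cos(2\pi x/p)/s_1^2) = \sigma_2^2 \exp(-x^2/l_2^2)$ holds simultaneously for $x \in \{0, q, mp, mp+q\}$. -/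
/-!
At the lags `0, mp` and at `q, mp + q` the periodic factor takes equal values, so subtracting
eliminates `c` and leaves, with `M = mp`, two relations `σ₁² Δ_{l₁} = σ₂² Δ_{l₂}` between
increments of the Gaussians. Their quotient says `φ (1/l₁²) = φ (1/l₂²)` for
`φ t = (e^{-q² t} - e^{-(M+q)² t}) / (1 - e^{-M² t})`. After factoring out `e^{-q² t}`, `φ` is
strictly decreasing on `(0, ∞)` because secant slopes of the strictly convex `u ↦ u ^ r`,
`r = (M² + 2Mq) / M² > 1`, through `u = 1` increase; hence `l₁ = l₂`.
-/

open Real Set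

theorem strictMonoOn_one_sub_rpow_div_one_sub {r : ℝ} (hr : 1 < r) :
    StrictMonoOn (fun u : ℝ => (1 - u ^ r) / (1 - u)) (Ico 0 1) := by
  intro x hx y hy hxy
  have h := (strictConvexOn_rpow hr).secant_strict_mono (a := 1) (by simp) hx.1 hy.1
    hx.2.ne hy.2.ne hxy
  convert h using 1 <;> rw [← neg_div_neg_eq] <;> simp

theorem strictAntiOn_one_sub_exp_div_one_sub_exp {γ δ : ℝ} (hγ : 0 < γ) (hγδ : γ < δ) :
    StrictAntiOn (fun t => (1 - exp (-(δ * t))) / (1 - exp (-(γ * t)))) (Ioi 0) := by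
  have hexp : StrictAntiOn (fun t => exp (-(γ * t))) (Ioi 0) := fun s _ t _ hst =>
    exp_lt_exp.2 (by nlinarith)
  have hmaps : MapsTo (fun t => exp (-(γ * t))) (Ioi 0) (Ico 0 1) := fun t (ht : 0 < t) =>
    ⟨(exp_pos _).le, exp_lt_one_iff.2 (by nlinarith)⟩
  convert (strictMonoOn_one_sub_rpow_div_one_sub ((one_lt_div hγ).2 hγδ)).comp_strictAntiOn
    hexp hmaps using 3 with t
  simp only [Function.comp_apply, ← exp_mul]
  congr 2
  field_simp

theorem strictAntiOn_exp_sub_exp_div_one_sub_exp {α β γ : ℝ} (hα : 0 ≤ α) (hγ : 0 < γ)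
    (hγβ : γ < β - α) :
    StrictAntiOn (fun t => (exp (-(α * t)) - exp (-(β * t))) / (1 - exp (-(γ * t))))
      (Ioi 0) := by
  intro s (hs : 0 < s) t (ht : 0 < t) hst
  have hfactor : ∀ u, exp (-(α * u)) - exp (-(β * u)) =
      exp (-(α * u)) * (1 - exp (-((β - α) * u))) := fun u => by
    rw [mul_one_sub, ← exp_add]; ring_nf
  have hpos : 0 < (1 - exp (-((β - α) * t))) / (1 - exp (-(γ * t))) := by
    apply div_pos <;> rw [sub_pos, exp_lt_one_iff] <;> nlinarith
  simp only [hfactor, mul_div_assoc]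
  exact mul_lt_mul' (by gcongr) (strictAntiOn_one_sub_exp_div_one_sub_exp hγ hγβ hs ht hst)
    hpos.le (exp_pos _)

theorem eq_of_gaussian_increments {M q l₁ l₂ a b : ℝ} (hM : 0 < M) (hq : 0 < q) (hl₁ : 0 < l₁)
    (hl₂ : 0 < l₂) (ha : a ≠ 0)
    (h₀ : a * (1 - exp (-M ^ 2 / l₁ ^ 2)) = b * (1 - exp (-M ^ 2 / l₂ ^ 2)))
    (h_q : a * (exp (-q ^ 2 / l₁ ^ 2) - exp (-(M + q) ^ 2 / l₁ ^ 2)) =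
      b * (exp (-q ^ 2 / l₂ ^ 2) - exp (-(M + q) ^ 2 / l₂ ^ 2))) :
    l₁ = l₂ := by
  have hexponent : ∀ x l : ℝ, -x ^ 2 / l ^ 2 = -(x ^ 2 * (l ^ 2)⁻¹) := fun _ _ => by ring
  simp only [hexponent] at h₀ h_q
  set φ := fun t => (exp (-(q ^ 2 * t)) - exp (-((M + q) ^ 2 * t))) / (1 - exp (-(M ^ 2 * t)))
  have hφ : StrictAntiOn φ (Ioi 0) :=
    strictAntiOn_exp_sub_exp_div_one_sub_exp (sq_nonneg q) (by positivity) (by nlinarith)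
  have hden : ∀ l : ℝ, 0 < l → 1 - exp (-(M ^ 2 * (l ^ 2)⁻¹)) ≠ 0 := fun l hl => by
    rw [sub_ne_zero]; exact (exp_lt_one_iff.2 (neg_lt_zero.2 (by positivity))).ne'
  have hb : b ≠ 0 := by
    rintro rfl
    simp [ha, hden l₁ hl₁] at h₀
  have hφ_eq : φ (l₁ ^ 2)⁻¹ = φ (l₂ ^ 2)⁻¹ := by
    simp only [φ]
    rw [← mul_div_mul_left _ _ ha, h_q, h₀, mul_div_mul_left _ _ hb]
  have := hφ.injOn (by simp; positivity) (by simp; positivity) hφ_eq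
  rwa [inv_inj, pow_left_inj₀ hl₁.le hl₂.le two_ne_zero] at this

theorem no_linear_relation_general (p l₁ l₂ s₁ : ℝ) (hp : 0 < p) (hl₁ : 0 < l₁) (hl₂ : 0 < l₂)
    (hl : l₁ ≠ l₂) (m : ℕ) (hm : 0 < m) (q : ℝ) (hq : 0 < q) :
    ¬∃ (σ₁ σ₂ c : ℝ), 0 < σ₁ ∧ 0 < σ₂ ∧
      ∀ x ∈ ({0, q, m * p, m * p + q} : Set ℝ),
        σ₁ ^ 2 * Real.exp (-x ^ 2 / l₁ ^ 2) +
            c * Real.exp (Real.cos (2 * Real.pi * x / p) / s₁ ^ 2) =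
          σ₂ ^ 2 * Real.exp (-x ^ 2 / l₂ ^ 2) := by
  rintro ⟨σ₁, σ₂, c, hσ₁, -, h⟩
  have hcos_M : cos (2 * π * (m * p) / p) = cos (2 * π * 0 / p) := by
    rw [show 2 * π * (m * p) / p = m * (2 * π) by field_simp, cos_nat_mul_two_pi]
    simp
  have hcos_Mq : cos (2 * π * (m * p + q) / p) = cos (2 * π * q / p) := by
    rw [show 2 * π * (m * p + q) / p = 2 * π * q / p + m * (2 * π) by field_simp; ring,
      cos_add_nat_mul_two_pi]
  have e₀ := h 0 (by simp)
  have e_q := h q (by simp)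
  have e_M := h (m * p) (by simp)
  have e_Mq := h (m * p + q) (by simp)
  rw [hcos_M] at e_M
  rw [hcos_Mq] at e_Mq
  simp only [ne_eq, OfNat.ofNat_ne_zero, not_false_eq_true, zero_pow, neg_zero, zero_div,
    exp_zero, mul_one] at e₀
  refine hl (eq_of_gaussian_increments (M := m * p) (b := σ₂ ^ 2) (by positivity) hq hl₁ hl₂
    (pow_ne_zero 2 hσ₁.ne') ?_ ?_)
  · linear_combination e₀ - e_M
  · linear_combination e_q - e_Mq

theorem no_linear_relation (p l₁ l₂ s₁ : ℝ) (hp : 0 < p) (hl₁ : 0 < l₁) (hl₂ : 0 < l₂)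
    (hs₁ : 0 < s₁) (hl : l₁ ≠ l₂) (m : ℕ) (hm : 0 < m) (q : ℝ) (hq : 0 < q)
    (hqp : ¬∃ k : ℤ, q = k * p) :
    ¬∃ (σ₁ σ₂ c : ℝ), 0 < σ₁ ∧ 0 < σ₂ ∧
      ∀ x ∈ ({0, q, m * p, m * p + q} : Set ℝ),
        σ₁ ^ 2 * Real.exp (-x ^ 2 / l₁ ^ 2) +
            c * Real.exp (Real.cos (2 * Real.pi * x / p) / s₁ ^ 2) =
          σ₂ ^ 2 * Real.exp (-x ^ 2 / l₂ ^ 2) :=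
  no_linear_relation_general p l₁ l₂ s₁ hp hl₁ hl₂ hl m hm q hq
end
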